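/- arXiv:1108.1877 — 8 statements merged into one kernel-verified Lean document; each statement's English description precedes it below -/
import Mathlib

section
/- If (ψ, v, ρ) is a smooth solution of the governing system (E1)–(E3), then the substitution φ = ψ, μ = −v, r = −(g²/N²)ρ satisfies the adjoint system (A1)–(A3); that is, the governing system is quasi-self-adjoint. -/
noncomputable section

/-- Partial derivative with respect to the first variable `t`. -/
def pt (u : ℝ → ℝ → ℝ → ℝ) : ℝ → ℝ → ℝ → ℝ := fun t x z => deriv (fun s => u s x z) t

/-- Partial derivative with respect to the second variable `x`. -/
def px (u : ℝ → ℝ → ℝ → ℝ) : ℝ → ℝ → ℝ → ℝ := fun t x z => deriv (fun s => u t s z) x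

/-- Partial derivative with respect to the third variable `z`. -/
def pz (u : ℝ → ℝ → ℝ → ℝ) : ℝ → ℝ → ℝ → ℝ := fun t x z => deriv (fun s => u t x s) z

/-- Two-dimensional Laplacian in `(x, z)`. -/
def lap (u : ℝ → ℝ → ℝ → ℝ) : ℝ → ℝ → ℝ → ℝ :=
  fun t x z => px (px u) t x z + pz (pz u) t x z

/-- Jacobian `J(a, b) = a_x b_z − a_z b_x`. -/
def jac (a b : ℝ → ℝ → ℝ → ℝ) : ℝ → ℝ → ℝ → ℝ :=
  fun t x z => px a t x z * pz b t x z - pz a t x z * px b t x z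

/-- Smoothness (`C^∞`) of a function of three real variables. -/
def Smooth3 (u : ℝ → ℝ → ℝ → ℝ) : Prop :=
  ContDiff ℝ (⊤ : ℕ∞) (fun p : ℝ × ℝ × ℝ => u p.1 p.2.1 p.2.2)

/-- The governing system (E1)–(E3) of two-dimensional stratified rotating fluids. -/
def SolvesSystem (g f N : ℝ) (ψ v ρ : ℝ → ℝ → ℝ → ℝ) : Prop :=
  (∀ t x z, pt (lap ψ) t x z - g * px ρ t x z - f * pz v t x z = jac ψ (lap ψ) t x z) ∧
  (∀ t x z, pt v t x z + f * pz ψ t x z = jac ψ v t x z) ∧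
  (∀ t x z, pt ρ t x z + (N ^ 2 / g) * px ψ t x z = jac ψ ρ t x z)

/-- The quantity Θ appearing in the adjoint system. -/
def Theta (ψ v ρ φ μ r : ℝ → ℝ → ℝ → ℝ) : ℝ → ℝ → ℝ → ℝ :=
  fun t x z =>
    jac μ v t x z + jac r ρ t x z +
      2 * (pz (px φ) t x z * px (px ψ) t x z + pz (pz φ) t x z * pz (px ψ) t x z
        - px (px φ) t x z * pz (px ψ) t x z - pz (px φ) t x z * pz (pz ψ) t x z)

/-- The adjoint system (A1)–(A3). -/
def AdjointSystem (g f N : ℝ) (ψ v ρ φ μ r : ℝ → ℝ → ℝ → ℝ) : Prop :=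
  (∀ t x z, pt (lap φ) t x z + (N ^ 2 / g) * px r t x z + f * pz μ t x z
      - px φ t x z * pz (lap ψ) t x z + pz φ t x z * px (lap ψ) t x z
      - Theta ψ v ρ φ μ r t x z = 0) ∧
  (∀ t x z, - pt μ t x z - px μ t x z * pz ψ t x z + f * pz φ t x z
      + pz μ t x z * px ψ t x z = 0) ∧
  (∀ t x z, - pt r t x z + g * px φ t x z - px r t x z * pz ψ t x z
      + pz r t x z * px ψ t x z = 0)


lemma pt_neg (u : ℝ → ℝ → ℝ → ℝ) (t x z : ℝ) :
    pt (fun t x z => - u t x z) t x z = - pt u t x z := by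
  simp [pt, deriv.neg]

lemma px_neg (u : ℝ → ℝ → ℝ → ℝ) (t x z : ℝ) :
    px (fun t x z => - u t x z) t x z = - px u t x z := by
  simp [px, deriv.neg]

lemma pz_neg (u : ℝ → ℝ → ℝ → ℝ) (t x z : ℝ) :
    pz (fun t x z => - u t x z) t x z = - pz u t x z := by
  simp [pz, deriv.neg]

lemma pt_cmul (c : ℝ) (u : ℝ → ℝ → ℝ → ℝ) (t x z : ℝ) :
    pt (fun t x z => c * u t x z) t x z = c * pt u t x z := by
  simp [pt, deriv_const_mul_field']

lemma px_cmul (c : ℝ) (u : ℝ → ℝ → ℝ → ℝ) (t x z : ℝ) :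
    px (fun t x z => c * u t x z) t x z = c * px u t x z := by
  simp [px, deriv_const_mul_field']

lemma pz_cmul (c : ℝ) (u : ℝ → ℝ → ℝ → ℝ) (t x z : ℝ) :
    pz (fun t x z => c * u t x z) t x z = c * pz u t x z := by
  simp [pz, deriv_const_mul_field']

/-- quasi-self-adjointness of the governing system. -/
theorem quasi_self_adjointness (g f N : ℝ) (hg : g ≠ 0) (hN : N ≠ 0)
    (ψ v ρ : ℝ → ℝ → ℝ → ℝ) (hψ : Smooth3 ψ) (hv : Smooth3 v) (hρ : Smooth3 ρ)
    (hsol : SolvesSystem g f N ψ v ρ) :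
    AdjointSystem g f N ψ v ρ ψ (fun t x z => - v t x z)
      (fun t x z => - (g ^ 2 / N ^ 2) * ρ t x z) := by
  obtain ⟨h1, h2, h3⟩ := hsol
  refine ⟨fun t x z => ?_, fun t x z => ?_, fun t x z => ?_⟩
  · have e1 := h1 t x z
    simp only [jac, Theta] at e1 ⊢
    simp only [pt_neg, px_neg, pz_neg, pt_cmul, px_cmul, pz_cmul]
    have hNg : N ^ 2 / g * (g ^ 2 / N ^ 2) = g := by field_simp
    linear_combination e1 - px ρ t x z * hNg
  · have e2 := h2 t x z
    simp only [jac] at e2 ⊢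
    rw [pt_neg, px_neg, pz_neg]
    linarith
  · have e3 := h3 t x z
    simp only [jac] at e3 ⊢
    simp only [pt_neg, px_neg, pz_neg, pt_cmul, px_cmul, pz_cmul]
    have hNg : g ^ 2 / N ^ 2 * (N ^ 2 / g) = g := by field_simp
    linear_combination (g ^ 2 / N ^ 2) * e3 - px ψ t x z * hNg
end
end

section
/- For any smooth function ψ : ℝ³ → ℝ, the variational derivative of ψ·J(ψ, Δψ) with respect to ψ vanishes identically; explicitly, ψ_x Δψ_z − ψ_z Δψ_x − ∂_x(ψ Δψ_z) + ∂_z(ψ Δψ_x) − Δ(∂_z(ψ ψ_x)) + Δ(∂_x(ψ ψ_z)) = 0 at every point. -/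
noncomputable section

/-! ### Auxiliary lemmas -/

lemma px_eq_fderiv (u : ℝ → ℝ → ℝ → ℝ) (hu : Smooth3 u) (t x z : ℝ) :
    px u t x z = fderiv ℝ (fun p : ℝ × ℝ × ℝ => u p.1 p.2.1 p.2.2) (t, x, z) (0, 1, 0) := by
  have hF : DifferentiableAt ℝ (fun p : ℝ × ℝ × ℝ => u p.1 p.2.1 p.2.2) (t, x, z) :=
    (hu.differentiable (by simp)) _
  have hL : HasDerivAt (fun s : ℝ => ((t, s, z) : ℝ × ℝ × ℝ)) ((0, 1, 0) : ℝ × ℝ × ℝ) x :=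
    (hasDerivAt_const x t).prodMk ((hasDerivAt_id x).prodMk (hasDerivAt_const x z))
  have h := (hF.hasFDerivAt.comp_hasDerivAt x hL).deriv
  simp only [Function.comp_def] at h
  exact h

lemma pz_eq_fderiv (u : ℝ → ℝ → ℝ → ℝ) (hu : Smooth3 u) (t x z : ℝ) :
    pz u t x z = fderiv ℝ (fun p : ℝ × ℝ × ℝ => u p.1 p.2.1 p.2.2) (t, x, z) (0, 0, 1) := by
  have hF : DifferentiableAt ℝ (fun p : ℝ × ℝ × ℝ => u p.1 p.2.1 p.2.2) (t, x, z) :=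
    (hu.differentiable (by simp)) _
  have hL : HasDerivAt (fun s : ℝ => ((t, x, s) : ℝ × ℝ × ℝ)) ((0, 0, 1) : ℝ × ℝ × ℝ) z :=
    (hasDerivAt_const z t).prodMk ((hasDerivAt_const z x).prodMk (hasDerivAt_id z))
  have h := (hF.hasFDerivAt.comp_hasDerivAt z hL).deriv
  simp only [Function.comp_def] at h
  exact h

lemma smooth3_px (u : ℝ → ℝ → ℝ → ℝ) (hu : Smooth3 u) : Smooth3 (px u) := by
  have h : (fun p : ℝ × ℝ × ℝ => px u p.1 p.2.1 p.2.2)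
      = fun p => fderiv ℝ (fun p : ℝ × ℝ × ℝ => u p.1 p.2.1 p.2.2) p ((0, 1, 0) : ℝ × ℝ × ℝ) := by
    funext p; exact px_eq_fderiv u hu p.1 p.2.1 p.2.2
  unfold Smooth3
  rw [h]
  exact (hu.fderiv_right (by simp)).clm_apply contDiff_const

lemma smooth3_pz (u : ℝ → ℝ → ℝ → ℝ) (hu : Smooth3 u) : Smooth3 (pz u) := by
  have h : (fun p : ℝ × ℝ × ℝ => pz u p.1 p.2.1 p.2.2)
      = fun p => fderiv ℝ (fun p : ℝ × ℝ × ℝ => u p.1 p.2.1 p.2.2) p ((0, 0, 1) : ℝ × ℝ × ℝ) := by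
    funext p; exact pz_eq_fderiv u hu p.1 p.2.1 p.2.2
  unfold Smooth3
  rw [h]
  exact (hu.fderiv_right (by simp)).clm_apply contDiff_const

lemma smooth3_lap (u : ℝ → ℝ → ℝ → ℝ) (hu : Smooth3 u) : Smooth3 (lap u) :=
  (smooth3_px _ (smooth3_px _ hu)).add (smooth3_pz _ (smooth3_pz _ hu))

lemma second_deriv_apply (u : ℝ → ℝ → ℝ → ℝ) (hu : Smooth3 u) (p : ℝ × ℝ × ℝ)
    (v w : ℝ × ℝ × ℝ) :
    fderiv ℝ (fun q => fderiv ℝ (fun p : ℝ × ℝ × ℝ => u p.1 p.2.1 p.2.2) q w) p v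
      = fderiv ℝ (fderiv ℝ (fun p : ℝ × ℝ × ℝ => u p.1 p.2.1 p.2.2)) p v w := by
  set F := fun p : ℝ × ℝ × ℝ => u p.1 p.2.1 p.2.2 with hF
  have hD : HasFDerivAt (fderiv ℝ F) (fderiv ℝ (fderiv ℝ F) p) p :=
    (((hu.fderiv_right (m := (⊤ : ℕ∞)) (by simp)).differentiable (by simp)) p).hasFDerivAt
  have h := ((ContinuousLinearMap.apply ℝ ℝ w).hasFDerivAt.comp p hD).fderiv
  calc fderiv ℝ (fun q => fderiv ℝ F q w) p v
      = fderiv ℝ ((ContinuousLinearMap.apply ℝ ℝ w) ∘ (fderiv ℝ F)) p v := rfl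
    _ = ((ContinuousLinearMap.apply ℝ ℝ w).comp (fderiv ℝ (fderiv ℝ F) p)) v := by rw [h]
    _ = fderiv ℝ (fderiv ℝ F) p v w := rfl

/-- Clairaut's theorem: mixed partials in `x` and `z` commute for smooth functions. -/
lemma clairaut (u : ℝ → ℝ → ℝ → ℝ) (hu : Smooth3 u) (t x z : ℝ) :
    px (pz u) t x z = pz (px u) t x z := by
  set F := fun p : ℝ × ℝ × ℝ => u p.1 p.2.1 p.2.2 with hF
  have hpz : Smooth3 (pz u) := smooth3_pz u hu
  have hpx : Smooth3 (px u) := smooth3_px u hu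
  rw [px_eq_fderiv _ hpz, pz_eq_fderiv _ hpx]
  have hFz : (fun p : ℝ × ℝ × ℝ => pz u p.1 p.2.1 p.2.2)
      = fun p => fderiv ℝ F p ((0, 0, 1) : ℝ × ℝ × ℝ) := by
    funext p; exact pz_eq_fderiv u hu p.1 p.2.1 p.2.2
  have hFx : (fun p : ℝ × ℝ × ℝ => px u p.1 p.2.1 p.2.2)
      = fun p => fderiv ℝ F p ((0, 1, 0) : ℝ × ℝ × ℝ) := by
    funext p; exact px_eq_fderiv u hu p.1 p.2.1 p.2.2
  rw [hFz, hFx, second_deriv_apply u hu _ _ _, second_deriv_apply u hu _ _ _]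
  have hder : ∀ y, HasFDerivAt F (fderiv ℝ F y) y :=
    fun y => ((hu.differentiable (by simp)) y).hasFDerivAt
  have hD : HasFDerivAt (fderiv ℝ F) (fderiv ℝ (fderiv ℝ F) (t, x, z)) (t, x, z) :=
    (((hu.fderiv_right (m := (⊤ : ℕ∞)) (by simp)).differentiable (by simp)) (t, x, z)).hasFDerivAt
  exact second_derivative_symmetric hder hD _ _

lemma diff_line_x (u : ℝ → ℝ → ℝ → ℝ) (hu : Smooth3 u) (t x z : ℝ) :
    DifferentiableAt ℝ (fun s => u t s z) x := by
  have hF : Differentiable ℝ (fun p : ℝ × ℝ × ℝ => u p.1 p.2.1 p.2.2) :=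
    hu.differentiable (by simp)
  have hL : Differentiable ℝ (fun s : ℝ => ((t, s, z) : ℝ × ℝ × ℝ)) :=
    (differentiable_const t).prodMk (differentiable_id.prodMk (differentiable_const z))
  exact (hF.comp hL) x

lemma diff_line_z (u : ℝ → ℝ → ℝ → ℝ) (hu : Smooth3 u) (t x z : ℝ) :
    DifferentiableAt ℝ (fun s => u t x s) z := by
  have hF : Differentiable ℝ (fun p : ℝ × ℝ × ℝ => u p.1 p.2.1 p.2.2) :=
    hu.differentiable (by simp)
  have hL : Differentiable ℝ (fun s : ℝ => ((t, x, s) : ℝ × ℝ × ℝ)) :=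
    (differentiable_const t).prodMk ((differentiable_const x).prodMk differentiable_id)
  exact (hF.comp hL) z

lemma px_mul (u v : ℝ → ℝ → ℝ → ℝ) (hu : Smooth3 u) (hv : Smooth3 v) (t x z : ℝ) :
    px (fun t x z => u t x z * v t x z) t x z
      = px u t x z * v t x z + u t x z * px v t x z := by
  have h1 : HasDerivAt (fun s => u t s z) (px u t x z) x :=
    (diff_line_x u hu t x z).hasDerivAt
  have h2 : HasDerivAt (fun s => v t s z) (px v t x z) x :=
    (diff_line_x v hv t x z).hasDerivAt
  exact (h1.mul h2).deriv

lemma pz_mul (u v : ℝ → ℝ → ℝ → ℝ) (hu : Smooth3 u) (hv : Smooth3 v) (t x z : ℝ) :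
    pz (fun t x z => u t x z * v t x z) t x z
      = pz u t x z * v t x z + u t x z * pz v t x z := by
  have h1 : HasDerivAt (fun s => u t x s) (pz u t x z) z :=
    (diff_line_z u hu t x z).hasDerivAt
  have h2 : HasDerivAt (fun s => v t x s) (pz v t x z) z :=
    (diff_line_z v hv t x z).hasDerivAt
  exact (h1.mul h2).deriv

/-- the variational derivative of ψ·J(ψ, Δψ) with respect to ψ vanishes. -/
theorem var_deriv_psiJ_wrt_psi (ψ : ℝ → ℝ → ℝ → ℝ) (hψ : Smooth3 ψ) :
    ∀ t x z,
      px ψ t x z * pz (lap ψ) t x z - pz ψ t x z * px (lap ψ) t x z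
        - px (fun t x z => ψ t x z * pz (lap ψ) t x z) t x z
        + pz (fun t x z => ψ t x z * px (lap ψ) t x z) t x z
        - lap (pz (fun t x z => ψ t x z * px ψ t x z)) t x z
        + lap (px (fun t x z => ψ t x z * pz ψ t x z)) t x z = 0 := by
  intro t x z
  have hlap : Smooth3 (lap ψ) := smooth3_lap ψ hψ
  have hLz : Smooth3 (pz (lap ψ)) := smooth3_pz _ hlap
  have hLx : Smooth3 (px (lap ψ)) := smooth3_px _ hlap
  have hB := px_mul ψ (pz (lap ψ)) hψ hLz t x z
  have hC := pz_mul ψ (px (lap ψ)) hψ hLx t x z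
  have hcomm : px (pz (lap ψ)) t x z = pz (px (lap ψ)) t x z := clairaut (lap ψ) hlap t x z
  have hfun : pz (fun t x z => ψ t x z * px ψ t x z)
      = px (fun t x z => ψ t x z * pz ψ t x z) := by
    funext a b c
    rw [pz_mul ψ (px ψ) hψ (smooth3_px ψ hψ) a b c,
      px_mul ψ (pz ψ) hψ (smooth3_pz ψ hψ) a b c,
      clairaut ψ hψ a b c]
    ring
  rw [hB, hC, hcomm, hfun]
  ring
end
end

section
/- If (ψ, v, ρ) is a smooth solution of the governing system (E1)–(E3), then the vector (C¹, C², C³) = (v, v ψ_z, f ψ − v ψ_x) is a conserved vector: ∂_t(v) + ∂_x(v ψ_z) + ∂_z(f ψ − v ψ_x) = 0 at every point. -/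
noncomputable section

namespace ConservedAux

def F3 (u : ℝ → ℝ → ℝ → ℝ) : ℝ × ℝ × ℝ → ℝ := fun p => u p.1 p.2.1 p.2.2

lemma linex (t z x : ℝ) : HasDerivAt (fun s : ℝ => ((t, s, z) : ℝ×ℝ×ℝ)) (0,1,0) x :=
  (hasDerivAt_const _ _).prodMk ((hasDerivAt_id x).prodMk (hasDerivAt_const _ _))

lemma linez (t x z : ℝ) : HasDerivAt (fun s : ℝ => ((t, x, s) : ℝ×ℝ×ℝ)) (0,0,1) z :=
  (hasDerivAt_const _ _).prodMk ((hasDerivAt_const _ _).prodMk (hasDerivAt_id z))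

variable {u : ℝ → ℝ → ℝ → ℝ}

lemma slicex_hasDeriv (hu : Smooth3 u) (t x z : ℝ) :
    HasDerivAt (fun s => u t s z) (fderiv ℝ (F3 u) (t,x,z) (0,1,0)) x := by
  have hd : HasFDerivAt (F3 u) (fderiv ℝ (F3 u) (t,x,z)) (t,x,z) :=
    (hu.differentiable (by simp) (t,x,z)).hasFDerivAt
  exact hd.comp_hasDerivAt x (linex t z x)

lemma slicez_hasDeriv (hu : Smooth3 u) (t x z : ℝ) :
    HasDerivAt (fun s => u t x s) (fderiv ℝ (F3 u) (t,x,z) (0,0,1)) z := by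
  have hd : HasFDerivAt (F3 u) (fderiv ℝ (F3 u) (t,x,z)) (t,x,z) :=
    (hu.differentiable (by simp) (t,x,z)).hasFDerivAt
  exact hd.comp_hasDerivAt z (linez t x z)

lemma px_eq (hu : Smooth3 u) (t x z : ℝ) :
    px u t x z = fderiv ℝ (F3 u) (t,x,z) (0,1,0) := (slicex_hasDeriv hu t x z).deriv

lemma pz_eq (hu : Smooth3 u) (t x z : ℝ) :
    pz u t x z = fderiv ℝ (F3 u) (t,x,z) (0,0,1) := (slicez_hasDeriv hu t x z).deriv

lemma smooth3_px (hu : Smooth3 u) : Smooth3 (px u) := by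
  have : (fun p : ℝ×ℝ×ℝ => px u p.1 p.2.1 p.2.2)
      = fun p => fderiv ℝ (F3 u) p (0,1,0) := by
    funext p; exact px_eq hu p.1 p.2.1 p.2.2
  rw [Smooth3, this]
  exact (hu.fderiv_right (by simp)).clm_apply contDiff_const

lemma smooth3_pz (hu : Smooth3 u) : Smooth3 (pz u) := by
  have : (fun p : ℝ×ℝ×ℝ => pz u p.1 p.2.1 p.2.2)
      = fun p => fderiv ℝ (F3 u) p (0,0,1) := by
    funext p; exact pz_eq hu p.1 p.2.1 p.2.2
  rw [Smooth3, this]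
  exact (hu.fderiv_right (by simp)).clm_apply contDiff_const

lemma fderiv_apply_vec (hu : Smooth3 u) (w : ℝ×ℝ×ℝ) (p : ℝ×ℝ×ℝ) :
    HasFDerivAt (fun q => fderiv ℝ (F3 u) q w)
      ((ContinuousLinearMap.apply ℝ ℝ w).comp (fderiv ℝ (fderiv ℝ (F3 u)) p)) p := by
  have h1 : DifferentiableAt ℝ (fderiv ℝ (F3 u)) p :=
    ((hu.fderiv_right (m := 1) (WithTop.coe_le_coe.mpr le_top)).differentiable one_ne_zero) p
  exact (ContinuousLinearMap.apply ℝ ℝ w).hasFDerivAt.comp p h1.hasFDerivAt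

lemma mixed (hu : Smooth3 u) (t x z : ℝ) :
    pz (px u) t x z = px (pz u) t x z := by
  have hF2 : ∀ v w : ℝ×ℝ×ℝ,
      fderiv ℝ (fderiv ℝ (F3 u)) (t,x,z) v w = fderiv ℝ (fderiv ℝ (F3 u)) (t,x,z) w v := by
    intro v w
    refine second_derivative_symmetric (f := F3 u) (x := (t,x,z))
      (fun y => (hu.differentiable (by simp) y).hasFDerivAt) ?_ v w
    exact (((hu.fderiv_right (m := 1) (WithTop.coe_le_coe.mpr le_top)).differentiable one_ne_zero) (t,x,z)).hasFDerivAt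
  have e1 : pz (px u) t x z = fderiv ℝ (fderiv ℝ (F3 u)) (t,x,z) (0,0,1) (0,1,0) := by
    rw [pz_eq (smooth3_px hu) t x z]
    have hfun : F3 (px u) = fun q => fderiv ℝ (F3 u) q (0,1,0) := by
      funext p; exact px_eq hu p.1 p.2.1 p.2.2
    rw [hfun, (fderiv_apply_vec hu (0,1,0) (t,x,z)).fderiv]
    rfl
  have e2 : px (pz u) t x z = fderiv ℝ (fderiv ℝ (F3 u)) (t,x,z) (0,1,0) (0,0,1) := by
    rw [px_eq (smooth3_pz hu) t x z]
    have hfun : F3 (pz u) = fun q => fderiv ℝ (F3 u) q (0,0,1) := by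
      funext p; exact pz_eq hu p.1 p.2.1 p.2.2
    rw [hfun, (fderiv_apply_vec hu (0,0,1) (t,x,z)).fderiv]
    rfl
  rw [e1, e2, hF2]

lemma hasDerivAt_slicex (hu : Smooth3 u) (t x z : ℝ) :
    HasDerivAt (fun s => u t s z) (px u t x z) x := by
  rw [px_eq hu]; exact slicex_hasDeriv hu t x z

lemma hasDerivAt_slicez (hu : Smooth3 u) (t x z : ℝ) :
    HasDerivAt (fun s => u t x s) (pz u t x z) z := by
  rw [pz_eq hu]; exact slicez_hasDeriv hu t x z

end ConservedAux

/-- conserved vector (v, v ψ_z, f ψ − v ψ_x) from translation of v. -/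
theorem conserved_vector_translation_v (g f N : ℝ) (hg : g ≠ 0) (hN : N ≠ 0)
    (ψ v ρ : ℝ → ℝ → ℝ → ℝ) (hψ : Smooth3 ψ) (hv : Smooth3 v) (hρ : Smooth3 ρ)
    (hsol : SolvesSystem g f N ψ v ρ) :
    ∀ t x z,
      pt v t x z
        + px (fun t x z => v t x z * pz ψ t x z) t x z
        + pz (fun t x z => f * ψ t x z - v t x z * px ψ t x z) t x z = 0 := by
  intro t x z
  open ConservedAux in
  have h1 : HasDerivAt (fun s => v t s z * pz ψ t s z)
      (px v t x z * pz ψ t x z + v t x z * px (pz ψ) t x z) x :=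
    (hasDerivAt_slicex hv t x z).mul (hasDerivAt_slicex (smooth3_pz hψ) t x z)
  open ConservedAux in
  have h2 : HasDerivAt (fun s => f * ψ t x s - v t x s * px ψ t x s)
      (f * pz ψ t x z - (pz v t x z * px ψ t x z + v t x z * pz (px ψ) t x z)) z :=
    ((hasDerivAt_slicez hψ t x z).const_mul f).sub
      ((hasDerivAt_slicez hv t x z).mul (hasDerivAt_slicez (smooth3_px hψ) t x z))
  have e1 : px (fun t x z => v t x z * pz ψ t x z) t x z
      = px v t x z * pz ψ t x z + v t x z * px (pz ψ) t x z := h1.deriv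
  have e2 : pz (fun t x z => f * ψ t x z - v t x z * px ψ t x z) t x z
      = f * pz ψ t x z - (pz v t x z * px ψ t x z + v t x z * pz (px ψ) t x z) := h2.deriv
  have hm := ConservedAux.mixed hψ t x z
  have hE2 := hsol.2.1 t x z
  simp only [jac] at hE2
  rw [e1, e2, ← hm]
  linarith
end
end

section
/- Conservation of energy: if (ψ, v, ρ) is a smooth solution of the governing system (E1)–(E3), then with energy density E = v² + (g²/N²) ρ² + ψ_x² + ψ_z², flux components C² = 2gρψ + v² ψ_z + (g²/N²) ρ² ψ_z − 2ψ ψ_{xt} + ψ² Δψ_z and C³ = 2fvψ − v² ψ_x − (g²/N²) ρ² ψ_x − 2ψ ψ_{zt} − ψ² Δψ_x, one has ∂_t(E) + ∂_x(C²) + ∂_z(C³) = 0 at every point. -/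
noncomputable section

namespace EnergyAux

def F3 (u : ℝ → ℝ → ℝ → ℝ) : ℝ × ℝ × ℝ → ℝ := fun p => u p.1 p.2.1 p.2.2

variable {u : ℝ → ℝ → ℝ → ℝ}

theorem hasDerivAt_t (hu : Smooth3 u) (t x z : ℝ) :
    HasDerivAt (fun s => u s x z) (fderiv ℝ (F3 u) (t, x, z) (1, 0, 0)) t := by
  have hline : HasDerivAt (fun s : ℝ => ((s, x, z) : ℝ × ℝ × ℝ)) (1, 0, 0) t :=
    (hasDerivAt_id t).prodMk ((hasDerivAt_const t x).prodMk (hasDerivAt_const t z))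
  exact (hu.differentiable (by simp) (t, x, z)).hasFDerivAt.comp_hasDerivAt t hline

theorem hasDerivAt_x (hu : Smooth3 u) (t x z : ℝ) :
    HasDerivAt (fun s => u t s z) (fderiv ℝ (F3 u) (t, x, z) (0, 1, 0)) x := by
  have hline : HasDerivAt (fun s : ℝ => ((t, s, z) : ℝ × ℝ × ℝ)) (0, 1, 0) x :=
    (hasDerivAt_const x t).prodMk ((hasDerivAt_id x).prodMk (hasDerivAt_const x z))
  exact (hu.differentiable (by simp) (t, x, z)).hasFDerivAt.comp_hasDerivAt x hline

theorem hasDerivAt_z (hu : Smooth3 u) (t x z : ℝ) :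
    HasDerivAt (fun s => u t x s) (fderiv ℝ (F3 u) (t, x, z) (0, 0, 1)) z := by
  have hline : HasDerivAt (fun s : ℝ => ((t, x, s) : ℝ × ℝ × ℝ)) (0, 0, 1) z :=
    (hasDerivAt_const z t).prodMk ((hasDerivAt_const z x).prodMk (hasDerivAt_id z))
  exact (hu.differentiable (by simp) (t, x, z)).hasFDerivAt.comp_hasDerivAt z hline

theorem pt_eq (hu : Smooth3 u) (t x z : ℝ) :
    pt u t x z = fderiv ℝ (F3 u) (t, x, z) (1, 0, 0) := (hasDerivAt_t hu t x z).deriv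
theorem px_eq (hu : Smooth3 u) (t x z : ℝ) :
    px u t x z = fderiv ℝ (F3 u) (t, x, z) (0, 1, 0) := (hasDerivAt_x hu t x z).deriv
theorem pz_eq (hu : Smooth3 u) (t x z : ℝ) :
    pz u t x z = fderiv ℝ (F3 u) (t, x, z) (0, 0, 1) := (hasDerivAt_z hu t x z).deriv

theorem hdT (hu : Smooth3 u) (t x z : ℝ) :
    HasDerivAt (fun s => u s x z) (pt u t x z) t :=
  (hasDerivAt_t hu t x z).differentiableAt.hasDerivAt
theorem hdX (hu : Smooth3 u) (t x z : ℝ) :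
    HasDerivAt (fun s => u t s z) (px u t x z) x :=
  (hasDerivAt_x hu t x z).differentiableAt.hasDerivAt
theorem hdZ (hu : Smooth3 u) (t x z : ℝ) :
    HasDerivAt (fun s => u t x s) (pz u t x z) z :=
  (hasDerivAt_z hu t x z).differentiableAt.hasDerivAt

theorem F3_pt (hu : Smooth3 u) :
    F3 (pt u) = fun p => fderiv ℝ (F3 u) p (1, 0, 0) :=
  funext fun p => pt_eq hu p.1 p.2.1 p.2.2
theorem F3_px (hu : Smooth3 u) :
    F3 (px u) = fun p => fderiv ℝ (F3 u) p (0, 1, 0) :=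
  funext fun p => px_eq hu p.1 p.2.1 p.2.2
theorem F3_pz (hu : Smooth3 u) :
    F3 (pz u) = fun p => fderiv ℝ (F3 u) p (0, 0, 1) :=
  funext fun p => pz_eq hu p.1 p.2.1 p.2.2

theorem smooth_dir (hu : Smooth3 u) (a : ℝ × ℝ × ℝ) :
    ContDiff ℝ (⊤ : ℕ∞) (fun p => fderiv ℝ (F3 u) p a) :=
  (hu.fderiv_right (by simp)).clm_apply contDiff_const

theorem Smooth3.ptS (hu : Smooth3 u) : Smooth3 (pt u) := by
  have h : (fun p : ℝ × ℝ × ℝ => pt u p.1 p.2.1 p.2.2)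
      = fun p => fderiv ℝ (F3 u) p (1, 0, 0) := F3_pt hu
  unfold Smooth3
  rw [h]; exact smooth_dir hu _

theorem Smooth3.pxS (hu : Smooth3 u) : Smooth3 (px u) := by
  have h : (fun p : ℝ × ℝ × ℝ => px u p.1 p.2.1 p.2.2)
      = fun p => fderiv ℝ (F3 u) p (0, 1, 0) := F3_px hu
  unfold Smooth3
  rw [h]; exact smooth_dir hu _

theorem Smooth3.pzS (hu : Smooth3 u) : Smooth3 (pz u) := by
  have h : (fun p : ℝ × ℝ × ℝ => pz u p.1 p.2.1 p.2.2)
      = fun p => fderiv ℝ (F3 u) p (0, 0, 1) := F3_pz hu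
  unfold Smooth3
  rw [h]; exact smooth_dir hu _

theorem comm_gen (hu : Smooth3 u) (a b : ℝ × ℝ × ℝ) (q : ℝ × ℝ × ℝ) :
    fderiv ℝ (fun p => fderiv ℝ (F3 u) p a) q b
      = fderiv ℝ (fun p => fderiv ℝ (F3 u) p b) q a := by
  have hd : ∀ y, HasFDerivAt (F3 u) (fderiv ℝ (F3 u) y) y :=
    fun y => (hu.differentiable (by simp) y).hasFDerivAt
  have h2 : HasFDerivAt (fderiv ℝ (F3 u)) (fderiv ℝ (fderiv ℝ (F3 u)) q) q :=
    (((hu.fderiv_right (m := (⊤ : ℕ∞)) (by simp)).differentiable (by simp)) q).hasFDerivAt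
  have ha : fderiv ℝ (fun p => fderiv ℝ (F3 u) p a) q
      = (ContinuousLinearMap.apply ℝ ℝ a).comp (fderiv ℝ (fderiv ℝ (F3 u)) q) :=
    ((ContinuousLinearMap.apply ℝ ℝ a).hasFDerivAt.comp q h2).fderiv
  have hb : fderiv ℝ (fun p => fderiv ℝ (F3 u) p b) q
      = (ContinuousLinearMap.apply ℝ ℝ b).comp (fderiv ℝ (fderiv ℝ (F3 u)) q) :=
    ((ContinuousLinearMap.apply ℝ ℝ b).hasFDerivAt.comp q h2).fderiv
  rw [ha, hb]
  simp only [ContinuousLinearMap.comp_apply, ContinuousLinearMap.apply_apply]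
  exact second_derivative_symmetric hd h2 b a

theorem px_pt_comm (hu : Smooth3 u) (t x z : ℝ) :
    px (pt u) t x z = pt (px u) t x z := by
  rw [px_eq (Smooth3.ptS hu), pt_eq (Smooth3.pxS hu), F3_pt hu, F3_px hu]
  exact comm_gen hu (1, 0, 0) (0, 1, 0) (t, x, z)

theorem pz_pt_comm (hu : Smooth3 u) (t x z : ℝ) :
    pz (pt u) t x z = pt (pz u) t x z := by
  rw [pz_eq (Smooth3.ptS hu), pt_eq (Smooth3.pzS hu), F3_pt hu, F3_pz hu]
  exact comm_gen hu (1, 0, 0) (0, 0, 1) (t, x, z)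

theorem px_pz_comm (hu : Smooth3 u) (t x z : ℝ) :
    px (pz u) t x z = pz (px u) t x z := by
  rw [px_eq (Smooth3.pzS hu), pz_eq (Smooth3.pxS hu), F3_pz hu, F3_px hu]
  exact comm_gen hu (0, 0, 1) (0, 1, 0) (t, x, z)

theorem hasDerivAt_sq {f : ℝ → ℝ} {f' x : ℝ} (hf : HasDerivAt f f' x) :
    HasDerivAt (fun s => f s ^ 2) (2 * f x * f') x := by
  have h := hf.mul hf
  have he : (fun s => f s ^ 2) = fun s => f s * f s := by funext s; ring
  rw [he]
  exact h.congr_deriv (by ring)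

end EnergyAux

open EnergyAux in
/-- conservation of energy. -/
theorem conservation_of_energy (g f N : ℝ) (hg : g ≠ 0) (hN : N ≠ 0)
    (ψ v ρ : ℝ → ℝ → ℝ → ℝ) (hψ : Smooth3 ψ) (hv : Smooth3 v) (hρ : Smooth3 ρ)
    (hsol : SolvesSystem g f N ψ v ρ) :
    ∀ t x z,
      pt (fun t x z => v t x z ^ 2 + (g ^ 2 / N ^ 2) * ρ t x z ^ 2
          + px ψ t x z ^ 2 + pz ψ t x z ^ 2) t x z
        + px (fun t x z => 2 * g * ρ t x z * ψ t x z
            + v t x z ^ 2 * pz ψ t x z + (g ^ 2 / N ^ 2) * ρ t x z ^ 2 * pz ψ t x z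
            - 2 * ψ t x z * pt (px ψ) t x z + ψ t x z ^ 2 * pz (lap ψ) t x z) t x z
        + pz (fun t x z => 2 * f * v t x z * ψ t x z
            - v t x z ^ 2 * px ψ t x z - (g ^ 2 / N ^ 2) * ρ t x z ^ 2 * px ψ t x z
            - 2 * ψ t x z * pt (pz ψ) t x z - ψ t x z ^ 2 * px (lap ψ) t x z) t x z = 0 := by
  intro t x z
  have hψx := Smooth3.pxS hψ
  have hψz := Smooth3.pzS hψ
  have hlapS : Smooth3 (lap ψ) := by
    have h : (fun p : ℝ × ℝ × ℝ => lap ψ p.1 p.2.1 p.2.2)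
        = fun p => px (px ψ) p.1 p.2.1 p.2.2 + pz (pz ψ) p.1 p.2.1 p.2.2 := rfl
    unfold Smooth3
    rw [h]
    exact (Smooth3.pxS hψx).add (Smooth3.pzS hψz)
  have H1 := (((hasDerivAt_sq (hdT hv t x z)).add
      ((hasDerivAt_sq (hdT hρ t x z)).const_mul (g ^ 2 / N ^ 2))).add
      (hasDerivAt_sq (hdT hψx t x z))).add
      (hasDerivAt_sq (hdT hψz t x z))
  have h1 : pt (fun t x z => v t x z ^ 2 + (g ^ 2 / N ^ 2) * ρ t x z ^ 2
      + px ψ t x z ^ 2 + pz ψ t x z ^ 2) t x z = _ := H1.deriv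
  have H2 := ((((((hdX hρ t x z).const_mul (2 * g)).mul (hdX hψ t x z)).add
      ((hasDerivAt_sq (hdX hv t x z)).mul (hdX hψz t x z))).add
      (((hasDerivAt_sq (hdX hρ t x z)).const_mul (g ^ 2 / N ^ 2)).mul (hdX hψz t x z))).sub
      (((hdX hψ t x z).const_mul 2).mul (hdX (Smooth3.ptS hψx) t x z))).add
      ((hasDerivAt_sq (hdX hψ t x z)).mul (hdX (Smooth3.pzS hlapS) t x z))
  have h2 : px (fun t x z => 2 * g * ρ t x z * ψ t x z
      + v t x z ^ 2 * pz ψ t x z + (g ^ 2 / N ^ 2) * ρ t x z ^ 2 * pz ψ t x z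
      - 2 * ψ t x z * pt (px ψ) t x z + ψ t x z ^ 2 * pz (lap ψ) t x z) t x z = _ := H2.deriv
  have H3 := ((((((hdZ hv t x z).const_mul (2 * f)).mul (hdZ hψ t x z)).sub
      ((hasDerivAt_sq (hdZ hv t x z)).mul (hdZ hψx t x z))).sub
      (((hasDerivAt_sq (hdZ hρ t x z)).const_mul (g ^ 2 / N ^ 2)).mul (hdZ hψx t x z))).sub
      (((hdZ hψ t x z).const_mul 2).mul (hdZ (Smooth3.ptS hψz) t x z))).sub
      ((hasDerivAt_sq (hdZ hψ t x z)).mul (hdZ (Smooth3.pxS hlapS) t x z))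
  have h3 : pz (fun t x z => 2 * f * v t x z * ψ t x z
      - v t x z ^ 2 * px ψ t x z - (g ^ 2 / N ^ 2) * ρ t x z ^ 2 * px ψ t x z
      - 2 * ψ t x z * pt (pz ψ) t x z - ψ t x z ^ 2 * px (lap ψ) t x z) t x z = _ := H3.deriv
  obtain ⟨he1, he2, he3⟩ := hsol
  have e1 := he1 t x z
  have e2 := he2 t x z
  have e3 := he3 t x z
  simp only [jac] at e1 e2 e3
  have hlin : pt (lap ψ) t x z = pt (px (px ψ)) t x z + pt (pz (pz ψ)) t x z :=
    ((hdT (Smooth3.pxS hψx) t x z).add (hdT (Smooth3.pzS hψz) t x z)).deriv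
  have hc1 := px_pt_comm hψx t x z
  have hc2 := pz_pt_comm hψz t x z
  have hc3 := px_pz_comm hlapS t x z
  have hc4 := px_pz_comm hψ t x z
  have hcg : (g ^ 2 / N ^ 2) * (N ^ 2 / g) = g := by field_simp
  rw [h1, h2, h3]
  linear_combination 2 * v t x z * e2 + 2 * (g ^ 2 / N ^ 2) * ρ t x z * e3
    - 2 * ψ t x z * e1 + 2 * ψ t x z * hlin - 2 * ρ t x z * px ψ t x z * hcg
    - 2 * ψ t x z * hc1 - 2 * ψ t x z * hc2 + ψ t x z ^ 2 * hc3
    + (v t x z ^ 2 + (g ^ 2 / N ^ 2) * ρ t x z ^ 2) * hc4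
end
end

section
/- Reduction to ODEs: let k, m be real constants with k² + m² ≠ 0, and let φ, V, R : ℝ → ℝ be differentiable functions satisfying φ'(t) = (g k R(t) + f m V(t)) / (2(k² + m²)), V'(t) = −2 f m φ(t), and R'(t) = −(2k/g) N² φ(t). Then the functions v(t,x,z) = λ V(t), ρ(t,x,z) = λ R(t), ψ(t,x,z) = λ² φ(t), with λ = kx + mz, form a solution of the governing system (E1)–(E3). -/
noncomputable section

lemma hd_lin (c a x : ℝ) : HasDerivAt (fun s => c * s + a) c x := by
  simpa using ((hasDerivAt_id x).const_mul c).add_const a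

lemma hd_lin' (c a x : ℝ) : HasDerivAt (fun s => a + c * s) c x := by
  simpa using ((hasDerivAt_id x).const_mul c).const_add a

/-- reduction to ODEs gives invariant solutions. -/
theorem reduction_to_odes (g f N k m : ℝ) (hg : g ≠ 0) (hN : N ≠ 0)
    (hkm : k ^ 2 + m ^ 2 ≠ 0)
    (φ V R : ℝ → ℝ) (hφ : Differentiable ℝ φ) (hV : Differentiable ℝ V)
    (hR : Differentiable ℝ R)
    (hφ' : ∀ t, deriv φ t = (g * k * R t + f * m * V t) / (2 * (k ^ 2 + m ^ 2)))
    (hV' : ∀ t, deriv V t = - (2 * f * m) * φ t)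
    (hR' : ∀ t, deriv R t = - (2 * k / g) * N ^ 2 * φ t) :
    SolvesSystem g f N
      (fun t x z => (k * x + m * z) ^ 2 * φ t)
      (fun t x z => (k * x + m * z) * V t)
      (fun t x z => (k * x + m * z) * R t) := by
  set ψ : ℝ → ℝ → ℝ → ℝ := fun t x z => (k * x + m * z) ^ 2 * φ t with hψ
  set v : ℝ → ℝ → ℝ → ℝ := fun t x z => (k * x + m * z) * V t with hv
  set ρ : ℝ → ℝ → ℝ → ℝ := fun t x z => (k * x + m * z) * R t with hρ
  have hpx : ∀ t x z, px ψ t x z = 2 * (k * x + m * z) * k * φ t := by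
    intro t x z
    have h := (((hd_lin k (m * z) x).pow 2).mul_const (φ t)).deriv
    show deriv (fun s => (k * s + m * z) ^ 2 * φ t) x = _
    erw [h]; ring
  have hpz : ∀ t x z, pz ψ t x z = 2 * (k * x + m * z) * m * φ t := by
    intro t x z
    have h := (((hd_lin' m (k * x) z).pow 2).mul_const (φ t)).deriv
    show deriv (fun s => (k * x + m * s) ^ 2 * φ t) z = _
    erw [h]; ring
  have hlap : lap ψ = fun t _ _ => 2 * (k ^ 2 + m ^ 2) * φ t := by
    funext t x z
    have e1 : (fun s => px ψ t s z) = fun s => 2 * k * φ t * (k * s + m * z) := by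
      funext s; rw [hpx]; ring
    have e2 : (fun s => pz ψ t x s) = fun s => 2 * m * φ t * (k * x + m * s) := by
      funext s; rw [hpz]; ring
    have a1 : px (px ψ) t x z = 2 * k * φ t * k := by
      show deriv (fun s => px ψ t s z) x = _
      rw [e1]; exact ((hd_lin k (m * z) x).const_mul (2 * k * φ t)).deriv
    have a2 : pz (pz ψ) t x z = 2 * m * φ t * m := by
      show deriv (fun s => pz ψ t x s) z = _
      rw [e2]; exact ((hd_lin' m (k * x) z).const_mul (2 * m * φ t)).deriv
    show px (px ψ) t x z + pz (pz ψ) t x z = _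
    rw [a1, a2]; ring
  have hvx : ∀ t x z, px v t x z = k * V t := fun t x z =>
    ((hd_lin k (m * z) x).mul_const (V t)).deriv
  have hvz : ∀ t x z, pz v t x z = m * V t := fun t x z =>
    ((hd_lin' m (k * x) z).mul_const (V t)).deriv
  have hrx : ∀ t x z, px ρ t x z = k * R t := fun t x z =>
    ((hd_lin k (m * z) x).mul_const (R t)).deriv
  have hrz : ∀ t x z, pz ρ t x z = m * R t := fun t x z =>
    ((hd_lin' m (k * x) z).mul_const (R t)).deriv
  refine ⟨?_, ?_, ?_⟩
  · intro t x z
    rw [hlap]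
    have p1 : pt (fun t _ _ => 2 * (k ^ 2 + m ^ 2) * φ t) t x z
        = 2 * (k ^ 2 + m ^ 2) * deriv φ t :=
      deriv_const_mul _ (hφ t)
    have j1 : jac ψ (fun t _ _ => 2 * (k ^ 2 + m ^ 2) * φ t) t x z = 0 := by
      have b1 : px (fun t _ _ => (2 * (k ^ 2 + m ^ 2) * φ t : ℝ)) t x z = 0 := deriv_const _ _
      have b2 : pz (fun t _ _ => (2 * (k ^ 2 + m ^ 2) * φ t : ℝ)) t x z = 0 := deriv_const _ _
      show px ψ t x z * pz _ t x z - pz ψ t x z * px _ t x z = 0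
      rw [b1, b2]; ring
    rw [p1, j1, hrx, hvz, hφ']
    field_simp
    ring
  · intro t x z
    have p1 : pt v t x z = (k * x + m * z) * deriv V t := deriv_const_mul _ (hV t)
    have j1 : jac ψ v t x z = 0 := by
      show px ψ t x z * pz v t x z - pz ψ t x z * px v t x z = 0
      rw [hpx, hpz, hvx, hvz]; ring
    rw [p1, j1, hpz, hV']
    ring
  · intro t x z
    have p1 : pt ρ t x z = (k * x + m * z) * deriv R t := deriv_const_mul _ (hR t)
    have j1 : jac ψ ρ t x z = 0 := by
      show px ψ t x z * pz ρ t x z - pz ψ t x z * px ρ t x z = 0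
      rw [hpx, hpz, hrx, hrz]; ring
    rw [p1, j1, hpx, hR']
    field_simp
    ring
end
end

section
/- Invariant solution: let k, m be real constants with k ≠ 0, g ≠ 0, N ≠ 0, let ω > 0 satisfy ω² = (k² N² + m² f²)/(k² + m²), let λ = kx + mz, and let C₁, C₂, C₃ be arbitrary real constants. Then the functions ρ = (2k N²/(g ω))[C₂ cos(ωt) − C₁ sin(ωt)] λ − (fm/(gk)) C₃ λ, v = (2fm/ω)[C₂ cos(ωt) − C₁ sin(ωt)] λ + C₃ λ, and ψ = [C₁ cos(ωt) + C₂ sin(ωt)] λ² form a solution of the governing system (E1)–(E3). -/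
noncomputable section

private lemma hd_affine (a b x : ℝ) : HasDerivAt (fun s : ℝ => a * s + b) a x := by
  simpa using ((hasDerivAt_id x).const_mul a).add_const b

private lemma deriv_linear_eq (F : ℝ → ℝ) (p q x : ℝ) (h : ∀ s, F s = p * s + q) :
    deriv F x = p := by
  rw [funext h]; exact (hd_affine p q x).deriv

private lemma deriv_quad_eq (F : ℝ → ℝ) (c a b x : ℝ) (h : ∀ s, F s = c * (a * s + b) ^ 2) :
    deriv F x = c * (2 * (a * x + b) * a) := by
  rw [funext h]
  simpa using (((hd_affine a b x).pow 2).const_mul c).deriv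

private lemma hd_trigA (C₁ C₂ ω t : ℝ) :
    HasDerivAt (fun s : ℝ => C₁ * Real.cos (ω * s) + C₂ * Real.sin (ω * s))
      (ω * (C₂ * Real.cos (ω * t) - C₁ * Real.sin (ω * t))) t := by
  have h1 : HasDerivAt (fun s : ℝ => ω * s) ω t := by
    simpa using (hasDerivAt_id t).const_mul ω
  have hc : HasDerivAt (fun s : ℝ => Real.cos (ω * s)) (-Real.sin (ω * t) * ω) t :=
    (Real.hasDerivAt_cos (ω * t)).comp t h1
  have hs : HasDerivAt (fun s : ℝ => Real.sin (ω * s)) (Real.cos (ω * t) * ω) t :=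
    (Real.hasDerivAt_sin (ω * t)).comp t h1
  have h2 := (hc.const_mul C₁).add (hs.const_mul C₂)
  exact h2.congr_deriv (by ring)

private lemma hd_trigB (C₁ C₂ ω t : ℝ) :
    HasDerivAt (fun s : ℝ => C₂ * Real.cos (ω * s) - C₁ * Real.sin (ω * s))
      (-(ω * (C₁ * Real.cos (ω * t) + C₂ * Real.sin (ω * t)))) t := by
  have h1 : HasDerivAt (fun s : ℝ => ω * s) ω t := by
    simpa using (hasDerivAt_id t).const_mul ω
  have hc : HasDerivAt (fun s : ℝ => Real.cos (ω * s)) (-Real.sin (ω * t) * ω) t :=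
    (Real.hasDerivAt_cos (ω * t)).comp t h1
  have hs : HasDerivAt (fun s : ℝ => Real.sin (ω * s)) (Real.cos (ω * t) * ω) t :=
    (Real.hasDerivAt_sin (ω * t)).comp t h1
  have h2 := (hc.const_mul C₂).sub (hs.const_mul C₁)
  exact h2.congr_deriv (by ring)

/-- the explicit invariant solution of the governing system. -/
theorem invariant_solution (g f N k m ω : ℝ) (hg : g ≠ 0) (hN : N ≠ 0) (hk : k ≠ 0)
    (hω : 0 < ω) (hω2 : ω ^ 2 = (k ^ 2 * N ^ 2 + m ^ 2 * f ^ 2) / (k ^ 2 + m ^ 2))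
    (C₁ C₂ C₃ : ℝ) :
    SolvesSystem g f N
      (fun t x z => (C₁ * Real.cos (ω * t) + C₂ * Real.sin (ω * t)) * (k * x + m * z) ^ 2)
      (fun t x z => (2 * f * m / ω) * (C₂ * Real.cos (ω * t) - C₁ * Real.sin (ω * t))
          * (k * x + m * z) + C₃ * (k * x + m * z))
      (fun t x z => (2 * k * N ^ 2 / (g * ω)) * (C₂ * Real.cos (ω * t) - C₁ * Real.sin (ω * t))
          * (k * x + m * z) - (f * m / (g * k)) * C₃ * (k * x + m * z)) := by
  have hω0 : ω ≠ 0 := ne_of_gt hω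
  have hkm : k ^ 2 + m ^ 2 ≠ 0 := by positivity
  rw [eq_div_iff hkm] at hω2
  -- first space derivatives of ψ
  have hψx : ∀ t x z : ℝ, deriv (fun s =>
      (C₁ * Real.cos (ω * t) + C₂ * Real.sin (ω * t)) * (k * s + m * z) ^ 2) x =
      (C₁ * Real.cos (ω * t) + C₂ * Real.sin (ω * t)) * (2 * (k * x + m * z) * k) :=
    fun t x z => deriv_quad_eq _ _ k (m * z) x (fun s => rfl)
  have hψz : ∀ t x z : ℝ, deriv (fun s =>
      (C₁ * Real.cos (ω * t) + C₂ * Real.sin (ω * t)) * (k * x + m * s) ^ 2) z =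
      (C₁ * Real.cos (ω * t) + C₂ * Real.sin (ω * t)) * (2 * (m * z + k * x) * m) :=
    fun t x z => deriv_quad_eq _ _ m (k * x) z (fun s => by ring_nf)
  -- second space derivatives of ψ
  have hψxx : ∀ t x z : ℝ, deriv (fun s =>
      (C₁ * Real.cos (ω * t) + C₂ * Real.sin (ω * t)) * (2 * (k * s + m * z) * k)) x =
      (C₁ * Real.cos (ω * t) + C₂ * Real.sin (ω * t)) * (2 * k * k) :=
    fun t x z => deriv_linear_eq _ _
      ((C₁ * Real.cos (ω * t) + C₂ * Real.sin (ω * t)) * (2 * (m * z) * k)) x (fun s => by ring)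
  have hψzz : ∀ t x z : ℝ, deriv (fun s =>
      (C₁ * Real.cos (ω * t) + C₂ * Real.sin (ω * t)) * (2 * (m * s + k * x) * m)) z =
      (C₁ * Real.cos (ω * t) + C₂ * Real.sin (ω * t)) * (2 * m * m) :=
    fun t x z => deriv_linear_eq _ _
      ((C₁ * Real.cos (ω * t) + C₂ * Real.sin (ω * t)) * (2 * (k * x) * m)) z (fun s => by ring)
  -- the laplacian of ψ
  have hlap : lap (fun t x z =>
      (C₁ * Real.cos (ω * t) + C₂ * Real.sin (ω * t)) * (k * x + m * z) ^ 2) =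
      fun t x z => (C₁ * Real.cos (ω * t) + C₂ * Real.sin (ω * t)) * (2 * k * k) +
        (C₁ * Real.cos (ω * t) + C₂ * Real.sin (ω * t)) * (2 * m * m) := by
    funext t x z
    simp only [lap, px, pz, hψx, hψz, hψxx, hψzz]
  refine ⟨fun t x z => ?_, fun t x z => ?_, fun t x z => ?_⟩
  · -- E1
    rw [hlap]
    simp only [pt, px, pz, jac]
    rw [hψx, hψz]
    rw [show deriv (fun s => (C₁ * Real.cos (ω * s) + C₂ * Real.sin (ω * s)) * (2 * k * k) +
        (C₁ * Real.cos (ω * s) + C₂ * Real.sin (ω * s)) * (2 * m * m)) t =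
        ω * (C₂ * Real.cos (ω * t) - C₁ * Real.sin (ω * t)) * (2 * k * k) +
        ω * (C₂ * Real.cos (ω * t) - C₁ * Real.sin (ω * t)) * (2 * m * m) from
      (((hd_trigA C₁ C₂ ω t).mul_const (2 * k * k)).add
        ((hd_trigA C₁ C₂ ω t).mul_const (2 * m * m))).deriv]
    rw [deriv_linear_eq (fun s => (2 * k * N ^ 2 / (g * ω)) *
        (C₂ * Real.cos (ω * t) - C₁ * Real.sin (ω * t)) * (k * s + m * z) -
        f * m / (g * k) * C₃ * (k * s + m * z))
      ((2 * k * N ^ 2 / (g * ω)) * (C₂ * Real.cos (ω * t) - C₁ * Real.sin (ω * t)) * k -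
        f * m / (g * k) * C₃ * k)
      ((2 * k * N ^ 2 / (g * ω)) * (C₂ * Real.cos (ω * t) - C₁ * Real.sin (ω * t)) * (m * z) -
        f * m / (g * k) * C₃ * (m * z)) x (fun s => by ring)]
    rw [deriv_linear_eq (fun s => 2 * f * m / ω *
        (C₂ * Real.cos (ω * t) - C₁ * Real.sin (ω * t)) * (k * x + m * s) +
        C₃ * (k * x + m * s))
      (2 * f * m / ω * (C₂ * Real.cos (ω * t) - C₁ * Real.sin (ω * t)) * m + C₃ * m)
      (2 * f * m / ω * (C₂ * Real.cos (ω * t) - C₁ * Real.sin (ω * t)) * (k * x) +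
        C₃ * (k * x)) z (fun s => by ring)]
    simp only [deriv_const']
    field_simp
    linear_combination
      (2 * (C₂ * Real.cos (ω * t) - C₁ * Real.sin (ω * t))) * hω2
  · -- E2
    simp only [pt, px, pz, jac]
    rw [hψx, hψz]
    rw [show deriv (fun s => 2 * f * m / ω * (C₂ * Real.cos (ω * s) - C₁ * Real.sin (ω * s)) *
        (k * x + m * z) + C₃ * (k * x + m * z)) t =
        2 * f * m / ω * -(ω * (C₁ * Real.cos (ω * t) + C₂ * Real.sin (ω * t))) *
        (k * x + m * z) from
      ((((hd_trigB C₁ C₂ ω t).const_mul (2 * f * m / ω)).mul_const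
        (k * x + m * z)).add_const (C₃ * (k * x + m * z))).deriv]
    rw [deriv_linear_eq (fun s => 2 * f * m / ω *
        (C₂ * Real.cos (ω * t) - C₁ * Real.sin (ω * t)) * (k * s + m * z) +
        C₃ * (k * s + m * z))
      (2 * f * m / ω * (C₂ * Real.cos (ω * t) - C₁ * Real.sin (ω * t)) * k + C₃ * k)
      (2 * f * m / ω * (C₂ * Real.cos (ω * t) - C₁ * Real.sin (ω * t)) * (m * z) +
        C₃ * (m * z)) x (fun s => by ring)]
    rw [deriv_linear_eq (fun s => 2 * f * m / ω *
        (C₂ * Real.cos (ω * t) - C₁ * Real.sin (ω * t)) * (k * x + m * s) +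
        C₃ * (k * x + m * s))
      (2 * f * m / ω * (C₂ * Real.cos (ω * t) - C₁ * Real.sin (ω * t)) * m + C₃ * m)
      (2 * f * m / ω * (C₂ * Real.cos (ω * t) - C₁ * Real.sin (ω * t)) * (k * x) +
        C₃ * (k * x)) z (fun s => by ring)]
    field_simp
    ring
  · -- E3
    simp only [pt, px, pz, jac]
    rw [hψx, hψz]
    rw [show deriv (fun s => 2 * k * N ^ 2 / (g * ω) *
        (C₂ * Real.cos (ω * s) - C₁ * Real.sin (ω * s)) * (k * x + m * z) -
        f * m / (g * k) * C₃ * (k * x + m * z)) t =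
        2 * k * N ^ 2 / (g * ω) * -(ω * (C₁ * Real.cos (ω * t) + C₂ * Real.sin (ω * t))) *
        (k * x + m * z) from
      ((((hd_trigB C₁ C₂ ω t).const_mul (2 * k * N ^ 2 / (g * ω))).mul_const
        (k * x + m * z)).sub_const (f * m / (g * k) * C₃ * (k * x + m * z))).deriv]
    rw [deriv_linear_eq (fun s => 2 * k * N ^ 2 / (g * ω) *
        (C₂ * Real.cos (ω * t) - C₁ * Real.sin (ω * t)) * (k * s + m * z) -
        f * m / (g * k) * C₃ * (k * s + m * z))
      (2 * k * N ^ 2 / (g * ω) * (C₂ * Real.cos (ω * t) - C₁ * Real.sin (ω * t)) * k -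
        f * m / (g * k) * C₃ * k)
      (2 * k * N ^ 2 / (g * ω) * (C₂ * Real.cos (ω * t) - C₁ * Real.sin (ω * t)) * (m * z) -
        f * m / (g * k) * C₃ * (m * z)) x (fun s => by ring)]
    rw [deriv_linear_eq (fun s => 2 * k * N ^ 2 / (g * ω) *
        (C₂ * Real.cos (ω * t) - C₁ * Real.sin (ω * t)) * (k * x + m * s) -
        f * m / (g * k) * C₃ * (k * x + m * s))
      (2 * k * N ^ 2 / (g * ω) * (C₂ * Real.cos (ω * t) - C₁ * Real.sin (ω * t)) * m -
        f * m / (g * k) * C₃ * m)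
      (2 * k * N ^ 2 / (g * ω) * (C₂ * Real.cos (ω * t) - C₁ * Real.sin (ω * t)) * (k * x) -
        f * m / (g * k) * C₃ * (k * x)) z (fun s => by ring)]
    field_simp
    ring
end
end

section
/- Generalized invariant solution: let k, m be real constants with k² + m² ≠ 0, g ≠ 0, N ≠ 0, let ω > 0 satisfy ω² = (k² N² + m² f²)/(k² + m²), and let λ = kx + mz. Let A, B : ℝ → ℝ be arbitrary C² functions and F, H : ℝ → ℝ differentiable functions satisfying g k H'(λ) + f m F'(λ) = 0 for all λ. Then the functions ψ = A(λ) cos(ωt) + B(λ) sin(ωt), v = (fm/ω)[B'(λ) cos(ωt) − A'(λ) sin(ωt)] + F(λ), and ρ = (k N²/(g ω))[B'(λ) cos(ωt) − A'(λ) sin(ωt)] + H(λ) form a solution of the governing system (E1)–(E3). -/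
noncomputable section

lemma deriv_affx (Q : ℝ → ℝ) (k c x : ℝ) :
    deriv (fun s => Q (k * s + c)) x = k * deriv Q (k * x + c) := by
  rcases eq_or_ne k 0 with hk | hk
  · simp [hk]
  by_cases hQ : DifferentiableAt ℝ Q (k * x + c)
  · have h1 : HasDerivAt (fun s : ℝ => k * s + c) k x := by
      simpa using ((hasDerivAt_id x).const_mul k).add_const c
    simpa [mul_comm, Function.comp_def] using (hQ.hasDerivAt.comp x h1).deriv
  · rw [deriv_zero_of_not_differentiableAt hQ, mul_zero]
    apply deriv_zero_of_not_differentiableAt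
    intro hf
    apply hQ
    have h2 : DifferentiableAt ℝ (fun y : ℝ => k⁻¹ * (y - c)) (k * x + c) := by fun_prop
    have hval : k⁻¹ * ((k * x + c) - c) = x := by field_simp; ring
    have hf' : DifferentiableAt ℝ (fun s => Q (k * s + c)) (k⁻¹ * ((k * x + c) - c)) := by
      rw [hval]; exact hf
    have h3 : DifferentiableAt ℝ ((fun s => Q (k * s + c)) ∘ (fun y : ℝ => k⁻¹ * (y - c)))
        (k * x + c) := DifferentiableAt.comp _ hf' h2
    have heq : ((fun s => Q (k * s + c)) ∘ (fun y : ℝ => k⁻¹ * (y - c))) = Q := by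
      funext y
      simp only [Function.comp]
      congr 1
      field_simp
      ring
    rwa [heq] at h3

lemma deriv_affz (Q : ℝ → ℝ) (c m z : ℝ) :
    deriv (fun s => Q (c + m * s)) z = m * deriv Q (c + m * z) := by
  have h : (fun s => Q (c + m * s)) = fun s => Q (m * s + c) := by
    funext s; rw [add_comm]
  rw [h, deriv_affx, add_comm]

lemma deriv_trig (a b d ω t : ℝ) :
    deriv (fun s => a * Real.cos (ω * s) + b * Real.sin (ω * s) + d) t
      = ω * (b * Real.cos (ω * t) - a * Real.sin (ω * t)) := by
  have h1 : HasDerivAt (fun s : ℝ => ω * s) ω t := by simpa using (hasDerivAt_id t).const_mul ω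
  have hc : HasDerivAt (fun s : ℝ => Real.cos (ω * s)) (-Real.sin (ω * t) * ω) t :=
    (Real.hasDerivAt_cos (ω * t)).comp t h1
  have hs : HasDerivAt (fun s : ℝ => Real.sin (ω * s)) (Real.cos (ω * t) * ω) t :=
    (Real.hasDerivAt_sin (ω * t)).comp t h1
  have h : HasDerivAt (fun s => a * Real.cos (ω * s) + b * Real.sin (ω * s) + d)
      (a * (-Real.sin (ω * t) * ω) + b * (Real.cos (ω * t) * ω)) t := ((hc.const_mul a).add (hs.const_mul b)).add_const d
  rw [h.deriv]; ring

lemma deriv_lincos (A B : ℝ → ℝ) (l c s : ℝ) (hA : DifferentiableAt ℝ A l)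
    (hB : DifferentiableAt ℝ B l) :
    deriv (fun y => A y * c + B y * s) l = deriv A l * c + deriv B l * s := by
  rw [deriv_fun_add (hA.mul_const c) (hB.mul_const s), deriv_mul_const hA, deriv_mul_const hB]

lemma deriv_combo (P Q R : ℝ → ℝ) (a l c s : ℝ) (hP : DifferentiableAt ℝ P l)
    (hQ : DifferentiableAt ℝ Q l) (hR : DifferentiableAt ℝ R l) :
    deriv (fun y => a * (Q y * c - P y * s) + R y) l
      = a * (deriv Q l * c - deriv P l * s) + deriv R l := by
  rw [deriv_fun_add (((hQ.mul_const c).fun_sub (hP.mul_const s)).const_mul a) hR,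
    deriv_const_mul _ ((hQ.mul_const c).fun_sub (hP.mul_const s)),
    deriv_fun_sub (hQ.mul_const c) (hP.mul_const s), deriv_mul_const hQ, deriv_mul_const hP]

lemma deriv_klin (P Q : ℝ → ℝ) (a l c s : ℝ) (hP : DifferentiableAt ℝ P l)
    (hQ : DifferentiableAt ℝ Q l) :
    deriv (fun y => a * (P y * c + Q y * s)) l = a * (deriv P l * c + deriv Q l * s) := by
  rw [deriv_const_mul _ ((hP.mul_const c).fun_add (hQ.mul_const s)), deriv_lincos _ _ _ _ _ hP hQ]


/-- the generalized invariant solution of the governing system. -/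
theorem generalized_invariant_solution (g f N k m ω : ℝ) (hg : g ≠ 0) (hN : N ≠ 0)
    (hkm : k ^ 2 + m ^ 2 ≠ 0)
    (hω : 0 < ω) (hω2 : ω ^ 2 = (k ^ 2 * N ^ 2 + m ^ 2 * f ^ 2) / (k ^ 2 + m ^ 2))
    (A B F H : ℝ → ℝ) (hA : ContDiff ℝ 2 A) (hB : ContDiff ℝ 2 B)
    (hF : Differentiable ℝ F) (hH : Differentiable ℝ H)
    (hFH : ∀ s, g * k * deriv H s + f * m * deriv F s = 0) :
    SolvesSystem g f N
      (fun t x z => A (k * x + m * z) * Real.cos (ω * t) + B (k * x + m * z) * Real.sin (ω * t))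
      (fun t x z => (f * m / ω) * (deriv B (k * x + m * z) * Real.cos (ω * t)
          - deriv A (k * x + m * z) * Real.sin (ω * t)) + F (k * x + m * z))
      (fun t x z => (k * N ^ 2 / (g * ω)) * (deriv B (k * x + m * z) * Real.cos (ω * t)
          - deriv A (k * x + m * z) * Real.sin (ω * t)) + H (k * x + m * z)) := by

  have hω0 : ω ≠ 0 := ne_of_gt hω
  have hω2' : ω ^ 2 * (k ^ 2 + m ^ 2) = k ^ 2 * N ^ 2 + m ^ 2 * f ^ 2 := by
    rw [hω2, div_mul_cancel₀ _ hkm]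
  have hA1 : Differentiable ℝ A := hA.differentiable (by norm_num)
  have hB1 : Differentiable ℝ B := hB.differentiable (by norm_num)
  have hA2 : Differentiable ℝ (deriv A) := by
    have h2 : ContDiff ℝ ((1 : ℕ) + 1) A := by exact_mod_cast hA
    exact (contDiff_succ_iff_deriv.mp h2).2.2.differentiable (by norm_num)
  have hB2 : Differentiable ℝ (deriv B) := by
    have h2 : ContDiff ℝ ((1 : ℕ) + 1) B := by exact_mod_cast hB
    exact (contDiff_succ_iff_deriv.mp h2).2.2.differentiable (by norm_num)
  set Ψ : ℝ → ℝ → ℝ → ℝ := fun t x z =>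
    A (k * x + m * z) * Real.cos (ω * t) + B (k * x + m * z) * Real.sin (ω * t) with hΨ
  set V : ℝ → ℝ → ℝ → ℝ := fun t x z => (f * m / ω) * (deriv B (k * x + m * z) * Real.cos (ω * t)
      - deriv A (k * x + m * z) * Real.sin (ω * t)) + F (k * x + m * z) with hV
  set P : ℝ → ℝ → ℝ → ℝ := fun t x z =>
    (k * N ^ 2 / (g * ω)) * (deriv B (k * x + m * z) * Real.cos (ω * t)
      - deriv A (k * x + m * z) * Real.sin (ω * t)) + H (k * x + m * z) with hP
  -- first partials of Ψ
  have hψx : ∀ t x z, px Ψ t x z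
      = k * (deriv A (k * x + m * z) * Real.cos (ω * t)
          + deriv B (k * x + m * z) * Real.sin (ω * t)) := by
    intro t x z
    have e1 : deriv (fun s => A (k * s + m * z) * Real.cos (ω * t)
          + B (k * s + m * z) * Real.sin (ω * t)) x
        = k * deriv (fun y => A y * Real.cos (ω * t) + B y * Real.sin (ω * t)) (k * x + m * z) :=
      deriv_affx (fun y => A y * Real.cos (ω * t) + B y * Real.sin (ω * t)) k (m * z) x
    show deriv (fun s => Ψ t s z) x = _
    rw [hΨ]
    rw [e1, deriv_lincos A B _ _ _ (hA1 _) (hB1 _)]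
  have hψz : ∀ t x z, pz Ψ t x z
      = m * (deriv A (k * x + m * z) * Real.cos (ω * t)
          + deriv B (k * x + m * z) * Real.sin (ω * t)) := by
    intro t x z
    have e1 : deriv (fun s => A (k * x + m * s) * Real.cos (ω * t)
          + B (k * x + m * s) * Real.sin (ω * t)) z
        = m * deriv (fun y => A y * Real.cos (ω * t) + B y * Real.sin (ω * t)) (k * x + m * z) :=
      deriv_affz (fun y => A y * Real.cos (ω * t) + B y * Real.sin (ω * t)) (k * x) m z
    show deriv (fun s => Ψ t x s) z = _
    rw [hΨ]
    rw [e1, deriv_lincos A B _ _ _ (hA1 _) (hB1 _)]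
  -- second partials of Ψ
  have hψxx : ∀ t x z, px (px Ψ) t x z
      = k * (k * (deriv (deriv A) (k * x + m * z) * Real.cos (ω * t)
          + deriv (deriv B) (k * x + m * z) * Real.sin (ω * t))) := by
    intro t x z
    have hfun : (fun s' => px Ψ t s' z)
        = fun s' => k * (deriv A (k * s' + m * z) * Real.cos (ω * t)
            + deriv B (k * s' + m * z) * Real.sin (ω * t)) :=
      funext fun s' => hψx t s' z
    show deriv (fun s' => px Ψ t s' z) x = _
    rw [hfun]
    have e1 : deriv (fun s' => k * (deriv A (k * s' + m * z) * Real.cos (ω * t)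
          + deriv B (k * s' + m * z) * Real.sin (ω * t))) x
        = k * deriv (fun y => k * (deriv A y * Real.cos (ω * t)
            + deriv B y * Real.sin (ω * t))) (k * x + m * z) :=
      deriv_affx (fun y => k * (deriv A y * Real.cos (ω * t) + deriv B y * Real.sin (ω * t))) k (m * z) x
    rw [e1, deriv_klin _ _ _ _ _ _ (hA2 _) (hB2 _)]
  have hψzz : ∀ t x z, pz (pz Ψ) t x z
      = m * (m * (deriv (deriv A) (k * x + m * z) * Real.cos (ω * t)
          + deriv (deriv B) (k * x + m * z) * Real.sin (ω * t))) := by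
    intro t x z
    have hfun : (fun s' => pz Ψ t x s')
        = fun s' => m * (deriv A (k * x + m * s') * Real.cos (ω * t)
            + deriv B (k * x + m * s') * Real.sin (ω * t)) :=
      funext fun s' => hψz t x s'
    show deriv (fun s' => pz Ψ t x s') z = _
    rw [hfun]
    have e1 : deriv (fun s' => m * (deriv A (k * x + m * s') * Real.cos (ω * t)
          + deriv B (k * x + m * s') * Real.sin (ω * t))) z
        = m * deriv (fun y => m * (deriv A y * Real.cos (ω * t)
            + deriv B y * Real.sin (ω * t))) (k * x + m * z) :=
      deriv_affz (fun y => m * (deriv A y * Real.cos (ω * t) + deriv B y * Real.sin (ω * t))) (k * x) m z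
    rw [e1, deriv_klin _ _ _ _ _ _ (hA2 _) (hB2 _)]
  have hlap : ∀ t x z, lap Ψ t x z
      = (k ^ 2 + m ^ 2) * (deriv (deriv A) (k * x + m * z) * Real.cos (ω * t)
          + deriv (deriv B) (k * x + m * z) * Real.sin (ω * t)) := by
    intro t x z
    show px (px Ψ) t x z + pz (pz Ψ) t x z = _
    rw [hψxx, hψzz]; ring
  -- t-derivative of lap Ψ
  have hlapt : ∀ t x z, pt (lap Ψ) t x z
      = ω * (((k ^ 2 + m ^ 2) * deriv (deriv B) (k * x + m * z)) * Real.cos (ω * t)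
          - ((k ^ 2 + m ^ 2) * deriv (deriv A) (k * x + m * z)) * Real.sin (ω * t)) := by
    intro t x z
    have hfun : (fun s => lap Ψ s x z)
        = fun s => ((k ^ 2 + m ^ 2) * deriv (deriv A) (k * x + m * z)) * Real.cos (ω * s)
            + ((k ^ 2 + m ^ 2) * deriv (deriv B) (k * x + m * z)) * Real.sin (ω * s) + 0 :=
      funext fun s => by rw [hlap s x z]; ring
    show deriv (fun s => lap Ψ s x z) t = _
    rw [hfun, deriv_trig]
  -- x and z derivatives of lap Ψ (possibly junk third derivatives, still proportional)
  have hlapx : ∀ t x z, px (lap Ψ) t x z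
      = k * deriv (fun y => (k ^ 2 + m ^ 2) * (deriv (deriv A) y * Real.cos (ω * t)
          + deriv (deriv B) y * Real.sin (ω * t))) (k * x + m * z) := by
    intro t x z
    have hfun : (fun s' => lap Ψ t s' z)
        = fun s' => (k ^ 2 + m ^ 2) * (deriv (deriv A) (k * s' + m * z) * Real.cos (ω * t)
            + deriv (deriv B) (k * s' + m * z) * Real.sin (ω * t)) :=
      funext fun s' => hlap t s' z
    show deriv (fun s' => lap Ψ t s' z) x = _
    rw [hfun]
    exact deriv_affx (fun y => (k ^ 2 + m ^ 2) * (deriv (deriv A) y * Real.cos (ω * t)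
      + deriv (deriv B) y * Real.sin (ω * t))) k (m * z) x
  have hlapz : ∀ t x z, pz (lap Ψ) t x z
      = m * deriv (fun y => (k ^ 2 + m ^ 2) * (deriv (deriv A) y * Real.cos (ω * t)
          + deriv (deriv B) y * Real.sin (ω * t))) (k * x + m * z) := by
    intro t x z
    have hfun : (fun s' => lap Ψ t x s')
        = fun s' => (k ^ 2 + m ^ 2) * (deriv (deriv A) (k * x + m * s') * Real.cos (ω * t)
            + deriv (deriv B) (k * x + m * s') * Real.sin (ω * t)) :=
      funext fun s' => hlap t x s'
    show deriv (fun s' => lap Ψ t x s') z = _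
    rw [hfun]
    exact deriv_affz (fun y => (k ^ 2 + m ^ 2) * (deriv (deriv A) y * Real.cos (ω * t)
      + deriv (deriv B) y * Real.sin (ω * t))) (k * x) m z
  -- partials of V
  have hVx : ∀ t x z, px V t x z
      = k * ((f * m / ω) * (deriv (deriv B) (k * x + m * z) * Real.cos (ω * t)
          - deriv (deriv A) (k * x + m * z) * Real.sin (ω * t)) + deriv F (k * x + m * z)) := by
    intro t x z
    have e1 : deriv (fun s => (f * m / ω) * (deriv B (k * s + m * z) * Real.cos (ω * t)
          - deriv A (k * s + m * z) * Real.sin (ω * t)) + F (k * s + m * z)) x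
        = k * deriv (fun y => (f * m / ω) * (deriv B y * Real.cos (ω * t)
            - deriv A y * Real.sin (ω * t)) + F y) (k * x + m * z) :=
      deriv_affx (fun y => (f * m / ω) * (deriv B y * Real.cos (ω * t)
        - deriv A y * Real.sin (ω * t)) + F y) k (m * z) x
    show deriv (fun s => V t s z) x = _
    rw [hV]
    rw [e1, deriv_combo _ _ _ _ _ _ _ (hA2 _) (hB2 _) (hF _)]
  have hVz : ∀ t x z, pz V t x z
      = m * ((f * m / ω) * (deriv (deriv B) (k * x + m * z) * Real.cos (ω * t)
          - deriv (deriv A) (k * x + m * z) * Real.sin (ω * t)) + deriv F (k * x + m * z)) := by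
    intro t x z
    have e1 : deriv (fun s => (f * m / ω) * (deriv B (k * x + m * s) * Real.cos (ω * t)
          - deriv A (k * x + m * s) * Real.sin (ω * t)) + F (k * x + m * s)) z
        = m * deriv (fun y => (f * m / ω) * (deriv B y * Real.cos (ω * t)
            - deriv A y * Real.sin (ω * t)) + F y) (k * x + m * z) :=
      deriv_affz (fun y => (f * m / ω) * (deriv B y * Real.cos (ω * t)
        - deriv A y * Real.sin (ω * t)) + F y) (k * x) m z
    show deriv (fun s => V t x s) z = _
    rw [hV]
    rw [e1, deriv_combo _ _ _ _ _ _ _ (hA2 _) (hB2 _) (hF _)]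
  have hVt : ∀ t x z, pt V t x z
      = ω * ((-((f * m / ω) * deriv A (k * x + m * z))) * Real.cos (ω * t)
          - ((f * m / ω) * deriv B (k * x + m * z)) * Real.sin (ω * t)) := by
    intro t x z
    have hfun : (fun s => V s x z)
        = fun s => ((f * m / ω) * deriv B (k * x + m * z)) * Real.cos (ω * s)
            + (-((f * m / ω) * deriv A (k * x + m * z))) * Real.sin (ω * s)
            + F (k * x + m * z) :=
      funext fun s => by rw [hV]; ring
    show deriv (fun s => V s x z) t = _
    rw [hfun, deriv_trig]
  -- partials of P
  have hPx : ∀ t x z, px P t x z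
      = k * ((k * N ^ 2 / (g * ω)) * (deriv (deriv B) (k * x + m * z) * Real.cos (ω * t)
          - deriv (deriv A) (k * x + m * z) * Real.sin (ω * t)) + deriv H (k * x + m * z)) := by
    intro t x z
    have e1 : deriv (fun s => (k * N ^ 2 / (g * ω)) * (deriv B (k * s + m * z) * Real.cos (ω * t)
          - deriv A (k * s + m * z) * Real.sin (ω * t)) + H (k * s + m * z)) x
        = k * deriv (fun y => (k * N ^ 2 / (g * ω)) * (deriv B y * Real.cos (ω * t)
            - deriv A y * Real.sin (ω * t)) + H y) (k * x + m * z) :=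
      deriv_affx (fun y => (k * N ^ 2 / (g * ω)) * (deriv B y * Real.cos (ω * t)
        - deriv A y * Real.sin (ω * t)) + H y) k (m * z) x
    show deriv (fun s => P t s z) x = _
    rw [hP]
    rw [e1, deriv_combo _ _ _ _ _ _ _ (hA2 _) (hB2 _) (hH _)]
  have hPz : ∀ t x z, pz P t x z
      = m * ((k * N ^ 2 / (g * ω)) * (deriv (deriv B) (k * x + m * z) * Real.cos (ω * t)
          - deriv (deriv A) (k * x + m * z) * Real.sin (ω * t)) + deriv H (k * x + m * z)) := by
    intro t x z
    have e1 : deriv (fun s => (k * N ^ 2 / (g * ω)) * (deriv B (k * x + m * s) * Real.cos (ω * t)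
          - deriv A (k * x + m * s) * Real.sin (ω * t)) + H (k * x + m * s)) z
        = m * deriv (fun y => (k * N ^ 2 / (g * ω)) * (deriv B y * Real.cos (ω * t)
            - deriv A y * Real.sin (ω * t)) + H y) (k * x + m * z) :=
      deriv_affz (fun y => (k * N ^ 2 / (g * ω)) * (deriv B y * Real.cos (ω * t)
        - deriv A y * Real.sin (ω * t)) + H y) (k * x) m z
    show deriv (fun s => P t x s) z = _
    rw [hP]
    rw [e1, deriv_combo _ _ _ _ _ _ _ (hA2 _) (hB2 _) (hH _)]
  have hPt : ∀ t x z, pt P t x z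
      = ω * ((-((k * N ^ 2 / (g * ω)) * deriv A (k * x + m * z))) * Real.cos (ω * t)
          - ((k * N ^ 2 / (g * ω)) * deriv B (k * x + m * z)) * Real.sin (ω * t)) := by
    intro t x z
    have hfun : (fun s => P s x z)
        = fun s => ((k * N ^ 2 / (g * ω)) * deriv B (k * x + m * z)) * Real.cos (ω * s)
            + (-((k * N ^ 2 / (g * ω)) * deriv A (k * x + m * z))) * Real.sin (ω * s)
            + H (k * x + m * z) :=
      funext fun s => by rw [hP]; ring
    show deriv (fun s => P s x z) t = _
    rw [hfun, deriv_trig]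
  refine ⟨fun t x z => ?_, fun t x z => ?_, fun t x z => ?_⟩
  · -- E1
    show pt (lap Ψ) t x z - g * px P t x z - f * pz V t x z
        = px Ψ t x z * pz (lap Ψ) t x z - pz Ψ t x z * px (lap Ψ) t x z
    rw [hlapt, hPx, hVz, hψx, hψz, hlapx, hlapz]
    have hFHl := hFH (k * x + m * z)
    set W := deriv (fun y => (k ^ 2 + m ^ 2) * (deriv (deriv A) y * Real.cos (ω * t)
      + deriv (deriv B) y * Real.sin (ω * t))) (k * x + m * z) with hW
    set a1 := deriv A (k * x + m * z)
    set b1 := deriv B (k * x + m * z)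
    set a2 := deriv (deriv A) (k * x + m * z)
    set b2 := deriv (deriv B) (k * x + m * z)
    set c := Real.cos (ω * t)
    set sn := Real.sin (ω * t)
    have key : ω * ((k ^ 2 + m ^ 2) * b2 * c - (k ^ 2 + m ^ 2) * a2 * sn)
        - g * (k * (k * N ^ 2 / (g * ω) * (b2 * c - a2 * sn) + deriv H (k * x + m * z)))
        - f * (m * (f * m / ω * (b2 * c - a2 * sn) + deriv F (k * x + m * z)))
        = (b2 * c - a2 * sn) / ω * (ω ^ 2 * (k ^ 2 + m ^ 2) - (k ^ 2 * N ^ 2 + m ^ 2 * f ^ 2))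
          - (g * k * deriv H (k * x + m * z) + f * m * deriv F (k * x + m * z)) := by
      field_simp
      ring
    rw [key, hω2', hFHl]
    ring
  · -- E2
    show pt V t x z + f * pz Ψ t x z = px Ψ t x z * pz V t x z - pz Ψ t x z * px V t x z
    rw [hVt, hψx, hψz, hVx, hVz]
    field_simp
    ring
  · -- E3
    show pt P t x z + (N ^ 2 / g) * px Ψ t x z
        = px Ψ t x z * pz P t x z - pz Ψ t x z * px P t x z
    rw [hPt, hψx, hψz, hPx, hPz]
    field_simp
    ring
end
end

section
/- Energy of the generalized invariant solution: let k, m be real constants with k² + m² ≠ 0, g ≠ 0, N ≠ 0, let ω > 0 satisfy ω² = (k² N² + m² f²)/(k² + m²), let λ = kx + mz, and let A, B : ℝ → ℝ be C¹ functions. For ψ = A(λ) cos(ωt) + B(λ) sin(ωt), v = (fm/ω)[B'(λ) cos(ωt) − A'(λ) sin(ωt)], ρ = (k N²/(g ω))[B'(λ) cos(ωt) − A'(λ) sin(ωt)], the energy density satisfies, at every point (t, x, z), v² + (g²/N²) ρ² + ψ_x² + ψ_z² = (k² + m²)[A'(λ)² + B'(λ)²]; in particular it is independent of t and constant along each straight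 line kx + mz = const. -/
noncomputable section

/-- energy density of the generalized invariant solution. -/
theorem energy_of_generalized_invariant_solution (g f N k m ω : ℝ)
    (hg : g ≠ 0) (hN : N ≠ 0) (hkm : k ^ 2 + m ^ 2 ≠ 0)
    (hω : 0 < ω) (hω2 : ω ^ 2 = (k ^ 2 * N ^ 2 + m ^ 2 * f ^ 2) / (k ^ 2 + m ^ 2))
    (A B : ℝ → ℝ) (hA : ContDiff ℝ 1 A) (hB : ContDiff ℝ 1 B) :
    ∀ t x z,
      ((f * m / ω) * (deriv B (k * x + m * z) * Real.cos (ω * t)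
          - deriv A (k * x + m * z) * Real.sin (ω * t))) ^ 2
        + (g ^ 2 / N ^ 2) * ((k * N ^ 2 / (g * ω)) * (deriv B (k * x + m * z) * Real.cos (ω * t)
            - deriv A (k * x + m * z) * Real.sin (ω * t))) ^ 2
        + (px (fun t x z => A (k * x + m * z) * Real.cos (ω * t)
            + B (k * x + m * z) * Real.sin (ω * t)) t x z) ^ 2
        + (pz (fun t x z => A (k * x + m * z) * Real.cos (ω * t)
            + B (k * x + m * z) * Real.sin (ω * t)) t x z) ^ 2
        = (k ^ 2 + m ^ 2) * (deriv A (k * x + m * z) ^ 2 + deriv B (k * x + m * z) ^ 2) := by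
  intro t x z
  have hdA : ∀ y, DifferentiableAt ℝ A y := fun y => (hA.differentiable one_ne_zero) y
  have hdB : ∀ y, DifferentiableAt ℝ B y := fun y => (hB.differentiable one_ne_zero) y
  -- derivative of the affine map s ↦ k*s + m*z at x
  have hpx : px (fun t x z => A (k * x + m * z) * Real.cos (ω * t)
      + B (k * x + m * z) * Real.sin (ω * t)) t x z
      = k * deriv A (k * x + m * z) * Real.cos (ω * t)
        + k * deriv B (k * x + m * z) * Real.sin (ω * t) := by
    have haff : HasDerivAt (fun s : ℝ => k * s + m * z) k x := by
      simpa using ((hasDerivAt_id x).const_mul k).add_const (m * z)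
    have h1 : HasDerivAt (fun s : ℝ => A (k * s + m * z))
        (deriv A (k * x + m * z) * k) x :=
      (hdA (k * x + m * z)).hasDerivAt.comp x haff
    have h2 : HasDerivAt (fun s : ℝ => B (k * s + m * z))
        (deriv B (k * x + m * z) * k) x :=
      (hdB (k * x + m * z)).hasDerivAt.comp x haff
    have h3 : HasDerivAt (fun s : ℝ => A (k * s + m * z) * Real.cos (ω * t)
        + B (k * s + m * z) * Real.sin (ω * t))
        (deriv A (k * x + m * z) * k * Real.cos (ω * t)
          + deriv B (k * x + m * z) * k * Real.sin (ω * t)) x :=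
      (h1.mul_const _).add (h2.mul_const _)
    simp only [px, h3.deriv]; ring
  have hpz : pz (fun t x z => A (k * x + m * z) * Real.cos (ω * t)
      + B (k * x + m * z) * Real.sin (ω * t)) t x z
      = m * deriv A (k * x + m * z) * Real.cos (ω * t)
        + m * deriv B (k * x + m * z) * Real.sin (ω * t) := by
    have haff : HasDerivAt (fun s : ℝ => k * x + m * s) m z := by
      simpa using (((hasDerivAt_id z).const_mul m).const_add (k * x))
    have h1 : HasDerivAt (fun s : ℝ => A (k * x + m * s))
        (deriv A (k * x + m * z) * m) z :=
      (hdA (k * x + m * z)).hasDerivAt.comp z haff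
    have h2 : HasDerivAt (fun s : ℝ => B (k * x + m * s))
        (deriv B (k * x + m * z) * m) z :=
      (hdB (k * x + m * z)).hasDerivAt.comp z haff
    have h3 : HasDerivAt (fun s : ℝ => A (k * x + m * s) * Real.cos (ω * t)
        + B (k * x + m * s) * Real.sin (ω * t))
        (deriv A (k * x + m * z) * m * Real.cos (ω * t)
          + deriv B (k * x + m * z) * m * Real.sin (ω * t)) z :=
      (h1.mul_const _).add (h2.mul_const _)
    simp only [pz, h3.deriv]; ring
  rw [hpx, hpz]
  have hω2' : ω ^ 2 * (k ^ 2 + m ^ 2) = k ^ 2 * N ^ 2 + m ^ 2 * f ^ 2 := by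
    field_simp at hω2; linarith
  have hs : Real.sin (ω * t) ^ 2 + Real.cos (ω * t) ^ 2 = 1 :=
    Real.sin_sq_add_cos_sq _
  set a := deriv A (k * x + m * z)
  set b := deriv B (k * x + m * z)
  set c := Real.cos (ω * t)
  set s := Real.sin (ω * t)
  have hωne : ω ≠ 0 := ne_of_gt hω
  field_simp
  linear_combination -(b * c - a * s) ^ 2 * hω2'
    + (k ^ 2 + m ^ 2) * (a ^ 2 + b ^ 2) * ω ^ 2 * hs
end
end
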